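/- arXiv:1407.4751 — 15 statements merged into one kernel-verified Lean document; each statement's English description precedes it below -/
import Mathlib

section
/- If ε ≡ 0 (mod 4), then there exist infinitely many positive odd integers n such that (n²+1)/2 has two positive divisors d₁, d₂ with d₁ + d₂ = 2n + ε. -/
/-- Vieta-jumping sequence of divisors. -/
def auxd (k : ℤ) : ℕ → ℤ
  | 0 => 1
  | 1 => 16*k^2 - 8*k + 5
  | (i+2) => (16*k^2 - 16*k + 6) * auxd k (i+1) - auxd k i + 8*k

lemma auxd_rec (k : ℤ) (i : ℕ) :
    auxd k (i+2) = (16*k^2 - 16*k + 6) * auxd k (i+1) - auxd k i + 8*k := rfl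

lemma auxd_inv (k : ℤ) : ∀ i : ℕ,
    (auxd k i + auxd k (i+1) - 4*k)^2 + 4
      = 8*(2*k^2 - 2*k + 1) * auxd k i * auxd k (i+1)
  | 0 => by
      show (1 + (16*k^2 - 8*k + 5) - 4*k)^2 + 4
          = 8*(2*k^2 - 2*k + 1) * 1 * (16*k^2 - 8*k + 5)
      ring
  | (i+1) => by
      have h := auxd_inv k i
      rw [auxd_rec]
      linear_combination h

lemma auxd_mono (k : ℤ) : ∀ i : ℕ, 1 ≤ auxd k i ∧ auxd k i < auxd k (i+1)
  | 0 => by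
      constructor
      · show (1:ℤ) ≤ 1; exact le_refl 1
      · show (1:ℤ) < 16*k^2 - 8*k + 5
        nlinarith [sq_nonneg (4*k - 1)]
  | (i+1) => by
      obtain ⟨h1, h2⟩ := auxd_mono k i
      refine ⟨by linarith, ?_⟩
      rw [auxd_rec]
      nlinarith [mul_nonneg (sq_nonneg (2*k - 1)) (by linarith : (0:ℤ) ≤ auxd k (i+1) - 1)]

lemma auxd_ge (k : ℤ) : ∀ i : ℕ, 16*k^2 - 8*k + 5 ≤ auxd k (i+1)
  | 0 => le_refl _
  | (i+1) => (auxd_ge k i).trans (auxd_mono k (i+1)).2.le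

/-- If `ε ≡ 0 (mod 4)`, then there exist infinitely many positive odd integers `n`
such that `(n²+1)/2` has two positive divisors `d₁, d₂` with `d₁ + d₂ = 2n + ε`. -/
theorem stmt0 (ε : ℤ) (hε : ε % 4 = 0) :
    {n : ℤ | 0 < n ∧ Odd n ∧ ∃ d₁ d₂ : ℤ, 0 < d₁ ∧ 0 < d₂ ∧
      d₁ ∣ (n ^ 2 + 1) / 2 ∧ d₂ ∣ (n ^ 2 + 1) / 2 ∧ d₁ + d₂ = 2 * n + ε}.Infinite := by
  obtain ⟨k, hk⟩ : ∃ k, ε = 4 * k := ⟨ε / 4, by omega⟩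
  set f : ℕ → ℤ := fun i => (auxd k i + auxd k (i+1) - 4*k) / 2 with hf
  have key : ∀ i, 2 * f i = auxd k i + auxd k (i+1) - 4*k := by
    intro i
    have hinv := auxd_inv k i
    have heven : Even (auxd k i + auxd k (i+1) - 4*k) := by
      have hsq : Even ((auxd k i + auxd k (i+1) - 4*k)^2) :=
        ⟨4*(2*k^2 - 2*k + 1) * auxd k i * auxd k (i+1) - 2, by linarith⟩
      rcases Int.even_or_odd (auxd k i + auxd k (i+1) - 4*k) with h | h
      · exact h
      · exfalso
        obtain ⟨m, hm⟩ := h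
        obtain ⟨c, hc⟩ := hsq
        have : 2*(2*m*m + 2*m) + 1 = c + c := by rw [← hc, hm]; ring
        omega
    exact Int.two_mul_ediv_two_of_even heven
  have hn2 : ∀ i, (f i)^2 + 1 = 2 * ((2*k^2 - 2*k + 1) * auxd k i * auxd k (i+1)) := by
    intro i
    have h4 : (4:ℤ) * ((f i)^2 + 1)
        = 4 * (2 * ((2*k^2 - 2*k + 1) * auxd k i * auxd k (i+1))) := by
      have h1 := auxd_inv k i
      have h2 := key i
      linear_combination h1 + (2 * f i + (auxd k i + auxd k (i+1) - 4*k)) * h2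
    exact mul_left_cancel₀ (by norm_num) h4
  apply Set.infinite_of_injective_forall_mem (f := f)
  · apply StrictMono.injective
    apply strictMono_nat_of_lt_succ
    intro i
    have k1 := key i
    have k2 := key (i+1)
    have m1 := (auxd_mono k i).2
    have m2 := (auxd_mono k (i+1)).2
    linarith
  · intro i
    have hpos2 : 0 < 2 * f i := by
      have := key i
      have h1 := (auxd_mono k i).1
      have h2 := auxd_ge k i
      nlinarith [sq_nonneg (8*k - 3)]
    have hpos : 0 < f i := by linarith
    have hodd : Odd (f i) := by
      rcases Int.even_or_odd (f i) with h | h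
      · exfalso
        obtain ⟨m, hm⟩ := h
        have h2 := hn2 i
        have : 2*(2*m*m) = 2 * ((2*k^2 - 2*k + 1) * auxd k i * auxd k (i+1)) - 1 := by
          rw [← h2, hm]; ring
        omega
      · exact h
    have hdivq : ((f i)^2 + 1) / 2 = (2*k^2 - 2*k + 1) * auxd k i * auxd k (i+1) := by
      rw [hn2 i]
      exact Int.mul_ediv_cancel_left _ (by norm_num)
    refine ⟨hpos, hodd, auxd k i, auxd k (i+1), ?_, ?_, ?_, ?_, ?_⟩
    · linarith [(auxd_mono k i).1]
    · linarith [(auxd_mono k i).1, (auxd_mono k i).2]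
    · rw [hdivq]
      exact ⟨(2*k^2 - 2*k + 1) * auxd k (i+1), by ring⟩
    · rw [hdivq]
      exact ⟨(2*k^2 - 2*k + 1) * auxd k i, by ring⟩
    · linarith [key i]
end

section
/- There exist infinitely many positive odd integers n such that (n²+1)/2 has two positive divisors d₁, d₂ with d₁ + d₂ = 2n; moreover any such divisors satisfy gcd(d₁, d₂) = 1 and d₁·d₂ = (n²+1)/2. -/
/-!
Solutions of the Pell equation `n² - 2m² = 1` give examples: `d₁ = n - m` and `d₂ = n + m`
multiply to `n² - m² = m² + 1 = (n² + 1)/2`, and the powers of `3 + 2√2` provide infinitely many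
such `n`.

Conversely, `N = (n² + 1)/2` is odd and `2N - n² = 1`, so every divisor of `N` is coprime to
`2n = d₁ + d₂`; hence `d₁, d₂` are coprime and `N = t d₁ d₂`. Squaring `d₁ + d₂ = 2n` gives
`d₁² + d₂² + 4 = (8t - 2) d₁ d₂`, and Vieta jumping shows that `a² + b² + 4 = k a b` has positive
solutions only for `k = 3` and `k = 6`; hence `t = 1`.
-/

open Pell

theorem eq_three_or_eq_six_of_sq_add_sq_add_four_eq_mul {a b k : ℤ} (ha : 0 < a) (hb : 0 < b)
    (h : a ^ 2 + b ^ 2 + 4 = k * a * b) : k = 3 ∨ k = 6 := by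
  obtain ⟨s, hs⟩ : ∃ s : ℕ, a + b ≤ s := ⟨(a + b).toNat, Int.self_le_toNat _⟩
  induction s generalizing a b with
  | zero => omega
  | succ s ih =>
    wlog hab : a ≤ b generalizing a b
    · exact this hb ha (by linear_combination h) (by omega) (by omega)
    rcases hab.eq_or_lt with rfl | hlt
    · have hk : (k - 2) * a ^ 2 = 4 := by linear_combination -h
      have hk2 : 0 < k - 2 := pos_of_mul_pos_left (by rw [hk]; norm_num) (sq_nonneg a)
      have ha2 : a ≤ 2 := by nlinarith
      interval_cases a <;> omega
    by_cases hsmall : b ^ 2 ≤ a ^ 2 + 4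
    · obtain ⟨rfl, rfl⟩ : a = 1 ∧ b = 2 := ⟨by nlinarith, by nlinarith⟩
      omega
    -- Vieta jump: the other root `k a - b = (a² + 4) / b` of `X² - k a X + a² + 4` is below `b`.
    have hbc : b * (k * a - b) = a ^ 2 + 4 := by linear_combination -h
    have hc : 0 < k * a - b := pos_of_mul_pos_right (by rw [hbc]; positivity) hb.le
    have hcb : k * a - b < b := by nlinarith
    exact ih ha hc (by linear_combination h) (by omega)

theorem isCoprime_of_dvd_of_add_eq_two_mul {n N d₁ d₂ : ℤ} (hN : n ^ 2 + 1 = 2 * N)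
    (hN_odd : Odd N) (h₁ : d₁ ∣ N) (hsum : d₁ + d₂ = 2 * n) : IsCoprime d₁ d₂ := by
  have hn : IsCoprime N n := ⟨2, -n, by linear_combination -hN⟩
  obtain ⟨k, hk⟩ := hN_odd
  have h2 : IsCoprime N 2 := ⟨1, -k, by linear_combination hk⟩
  refine IsCoprime.of_mul_add_left_right (z := 1) ?_
  rw [mul_one, hsum]
  exact (h2.mul_right hn).of_isCoprime_of_dvd_left h₁

theorem mul_eq_of_dvd_of_add_eq_two_mul {n N d₁ d₂ : ℤ} (hN : n ^ 2 + 1 = 2 * N)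
    (hd₁ : 0 < d₁) (hd₂ : 0 < d₂) (hco : IsCoprime d₁ d₂) (h₁ : d₁ ∣ N) (h₂ : d₂ ∣ N)
    (hsum : d₁ + d₂ = 2 * n) : d₁ * d₂ = N := by
  obtain ⟨t, ht⟩ := hco.mul_dvd h₁ h₂
  have ht_pos : 0 < t :=
    pos_of_mul_pos_right (by rw [← ht]; nlinarith) (mul_pos hd₁ hd₂).le
  have hvieta : d₁ ^ 2 + d₂ ^ 2 + 4 = (8 * t - 2) * d₁ * d₂ := by
    linear_combination (d₁ + d₂ + 2 * n) * hsum + 4 * hN + 8 * ht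
  have ht1 : t = 1 := by
    rcases eq_three_or_eq_six_of_sq_add_sq_add_four_eq_mul hd₁ hd₂ hvieta with h | h <;> omega
  rw [ht, ht1, mul_one]

theorem Int.odd_sq_add_one_ediv_two {n : ℤ} (hn : Odd n) : Odd ((n ^ 2 + 1) / 2) := by
  obtain ⟨k, rfl⟩ := hn
  exact ⟨k ^ 2 + k, Int.ediv_eq_of_eq_mul_right two_ne_zero (by ring)⟩

theorem exists_dvd_add_eq_two_mul_of_sq_eq {n m : ℤ} (hn : 0 < n) (h : n ^ 2 = 1 + 2 * m ^ 2) :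
    0 < n ∧ Odd n ∧ ∃ d₁ d₂ : ℤ, 0 < d₁ ∧ 0 < d₂ ∧
      d₁ ∣ (n ^ 2 + 1) / 2 ∧ d₂ ∣ (n ^ 2 + 1) / 2 ∧ d₁ + d₂ = 2 * n := by
  have hodd : Odd n := (Int.odd_pow' two_ne_zero).mp (h ▸ ⟨m ^ 2, by ring⟩)
  have hN : (n ^ 2 + 1) / 2 = (n - m) * (n + m) :=
    Int.ediv_eq_of_eq_mul_right two_ne_zero (by linear_combination -h)
  refine ⟨hn, hodd, n - m, n + m, by nlinarith, by nlinarith, ?_, ?_, by ring⟩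
  · exact hN ▸ dvd_mul_right _ _
  · exact hN ▸ dvd_mul_left _ _

def pellTwoGen : Solution₁ 2 := .mk 3 2 (by norm_num)

@[simp] theorem pellTwoGen_x : pellTwoGen.x = 3 := rfl

@[simp] theorem pellTwoGen_y : pellTwoGen.y = 2 := rfl

theorem pellTwoGen_pow_y_nonneg (k : ℕ) : 0 ≤ (pellTwoGen ^ k).y := by
  cases k with
  | zero => simp
  | succ k => exact (Solution₁.y_pow_succ_pos (by simp) (by simp) k).le

theorem strictMono_pellTwoGen_pow_x : StrictMono fun k : ℕ => (pellTwoGen ^ k).x := by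
  refine strictMono_nat_of_lt_succ fun k => ?_
  have hx := Solution₁.x_pow_pos (a := pellTwoGen) (by simp) k
  have hy := pellTwoGen_pow_y_nonneg k
  rw [pow_succ, Solution₁.x_mul, pellTwoGen_x, pellTwoGen_y]
  linarith

/-- There are infinitely many positive odd integers `n` such that `(n²+1)/2` has two positive
divisors `d₁, d₂` with `d₁ + d₂ = 2n`; moreover any such divisors satisfy `gcd(d₁,d₂) = 1`
and `d₁·d₂ = (n²+1)/2`. -/
theorem stmt2 :
    {n : ℤ | 0 < n ∧ Odd n ∧ ∃ d₁ d₂ : ℤ, 0 < d₁ ∧ 0 < d₂ ∧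
      d₁ ∣ (n ^ 2 + 1) / 2 ∧ d₂ ∣ (n ^ 2 + 1) / 2 ∧ d₁ + d₂ = 2 * n}.Infinite ∧
    ∀ n d₁ d₂ : ℤ, 0 < n → Odd n → 0 < d₁ → 0 < d₂ →
      d₁ ∣ (n ^ 2 + 1) / 2 → d₂ ∣ (n ^ 2 + 1) / 2 → d₁ + d₂ = 2 * n →
      Int.gcd d₁ d₂ = 1 ∧ d₁ * d₂ = (n ^ 2 + 1) / 2 := by
  refine ⟨Set.infinite_of_injective_forall_mem strictMono_pellTwoGen_pow_x.injective
    fun k => ?_, ?_⟩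
  · exact exists_dvd_add_eq_two_mul_of_sq_eq
      (Solution₁.x_pow_pos (by simp) k) (pellTwoGen ^ k).prop_x
  · intro n d₁ d₂ _ hn hd₁ hd₂ h₁ h₂ hsum
    have hN : n ^ 2 + 1 = 2 * ((n ^ 2 + 1) / 2) :=
      (Int.two_mul_ediv_two_of_even hn.pow.add_one).symm
    have hco := isCoprime_of_dvd_of_add_eq_two_mul hN (Int.odd_sq_add_one_ediv_two hn) h₁ hsum
    exact ⟨Int.isCoprime_iff_gcd_eq_one.mp hco,
      mul_eq_of_dvd_of_add_eq_two_mul hN hd₁ hd₂ hco h₁ h₂ hsum⟩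
end

section
/- Let δ ≥ 6 be a positive integer with δ ≡ 2 (mod 4). Then there does not exist a positive odd integer n and positive divisors d₁, d₂ of (n²+1)/2 with d₁ + d₂ = δn. -/
private lemma step3 (δ n d₁ d₂ : ℤ) (hn3 : 3 ≤ n) (hodd : Odd n)
    (hd₁ : 0 < d₁) (hd₂ : 0 < d₂) (hle : d₁ ≤ d₂)
    (hdvd₁ : d₁ ∣ (n ^ 2 + 1) / 2) (hdvd₂ : d₂ ∣ (n ^ 2 + 1) / 2)
    (hsum : d₁ + d₂ = δ * n) :
    ∃ n' e : ℤ, 0 < n' ∧ n' < n ∧ Odd n' ∧ 0 < e ∧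
      d₁ ∣ (n' ^ 2 + 1) / 2 ∧ e ∣ (n' ^ 2 + 1) / 2 ∧ d₁ + e = δ * n' := by
  obtain ⟨k, hk⟩ := hodd
  have h2m : n ^ 2 + 1 = 2 * (2 * k ^ 2 + 2 * k + 1) := by
    linear_combination (n + 2 * k + 1) * hk
  have hm : (n ^ 2 + 1) / 2 = 2 * k ^ 2 + 2 * k + 1 := by
    rw [h2m]; exact Int.mul_ediv_cancel_left _ two_ne_zero
  have hmpos : 0 < (n ^ 2 + 1) / 2 := by
    rw [hm]; nlinarith [sq_nonneg (2 * k + 1)]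
  have hoddd : ∀ d : ℤ, d ∣ (n ^ 2 + 1) / 2 → Odd d := by
    intro d hd
    rcases Int.even_or_odd d with he | ho
    · exfalso
      have h2d : (2 : ℤ) ∣ d := he.two_dvd
      have := h2d.trans hd
      rw [hm] at this
      omega
    · exact ho
  have hd₁odd := hoddd d₁ hdvd₁
  have hd₂odd := hoddd d₂ hdvd₂
  obtain ⟨d₂', hd₂'⟩ := hdvd₂
  have hE0 : n ^ 2 + 1 = 2 * (d₂ * d₂') := by
    rw [← hd₂', hm]; exact h2m
  have hd₂'pos : 0 < d₂' := by
    by_contra h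
    push_neg at h
    have := mul_nonpos_of_nonneg_of_nonpos hd₂.le h
    linarith [hmpos, hd₂']
  have E : n ^ 2 + 1 = 2 * (δ * n - d₁) * d₂' := by
    linear_combination hE0 + 2 * d₂' * hsum
  have hnn' : n * (2 * δ * d₂' - n) = 1 + 2 * d₁ * d₂' := by
    linear_combination -E
  have hn'pos : 0 < 2 * δ * d₂' - n := by
    by_contra h
    push_neg at h
    have h1 := mul_nonpos_of_nonneg_of_nonpos (by linarith : (0:ℤ) ≤ n) h
    have h2 := mul_pos hd₁ hd₂'pos
    linarith
  have hE' : (2 * δ * d₂' - n) ^ 2 + 1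
      = 2 * (d₂' * (δ * (2 * δ * d₂' - n) - d₁)) := by
    linear_combination E
  have hn'odd : Odd (2 * δ * d₂' - n) := ⟨δ * d₂' - k - 1, by linear_combination -hk⟩
  have he_pos : 0 < δ * (2 * δ * d₂' - n) - d₁ := by
    by_contra h
    push_neg at h
    have h1 := mul_nonpos_of_nonneg_of_nonpos hd₂'pos.le h
    nlinarith [sq_nonneg (2 * δ * d₂' - n)]
  have hn'div : ((2 * δ * d₂' - n) ^ 2 + 1) / 2
      = d₂' * (δ * (2 * δ * d₂' - n) - d₁) := by
    rw [hE']; exact Int.mul_ediv_cancel_left _ two_ne_zero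
  have hedvd : (δ * (2 * δ * d₂' - n) - d₁) ∣ ((2 * δ * d₂' - n) ^ 2 + 1) / 2 :=
    ⟨d₂', by rw [hn'div]; ring⟩
  -- d₁ divides (n'^2+1)/2
  have hd₁n2 : d₁ ∣ n ^ 2 + 1 := hdvd₁.trans ⟨2, by rw [hm]; linear_combination h2m⟩
  obtain ⟨c, hc⟩ := hd₁n2
  have cop : IsCoprime d₁ n := ⟨c, -n, by linear_combination -hc⟩
  have key : d₁ ∣ n ^ 2 * ((2 * δ * d₂' - n) ^ 2 + 1) :=
    ⟨4 * d₂' + 4 * d₁ * d₂' ^ 2 + c, by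
      linear_combination (n * (2 * δ * d₂' - n) + 1 + 2 * d₁ * d₂') * hnn' + hc⟩
  have hd₁n' : d₁ ∣ (2 * δ * d₂' - n) ^ 2 + 1 :=
    (cop.pow_right).dvd_of_dvd_mul_left key
  obtain ⟨j, hj⟩ := hd₁odd
  have cop2 : IsCoprime d₁ (2 : ℤ) := ⟨1, -j, by linear_combination hj⟩
  have h2' : 2 * (((2 * δ * d₂' - n) ^ 2 + 1) / 2) = (2 * δ * d₂' - n) ^ 2 + 1 := by
    rw [hn'div]; linear_combination -hE'
  have hd₁dvd : d₁ ∣ ((2 * δ * d₂' - n) ^ 2 + 1) / 2 := by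
    apply cop2.dvd_of_dvd_mul_left
    rw [h2']
    exact hd₁n'
  -- n' < n
  have hbound : n * (2 * δ * d₂' - n) ≤ n ^ 2 + 2 := by
    have := mul_le_mul_of_nonneg_right hle hd₂'pos.le
    linarith [hnn', hE0]
  have hlt : 2 * δ * d₂' - n < n := by
    by_contra h
    push_neg at h
    obtain ⟨k', hk'⟩ := hn'odd
    rcases eq_or_lt_of_le h with heq | hlt2
    · -- n = n'
      have hsq : n ^ 2 = 1 + 2 * d₁ * d₂' := by
        linear_combination hnn' + n * heq
      have h2eq : 2 * (d₂' * (d₂ - d₁)) = 2 := by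
        linear_combination hsq - hE0
      obtain ⟨b, hb⟩ := hd₂odd
      have h4 : 4 * (d₂' * (b - j)) = 2 := by
        linear_combination h2eq - 2 * d₂' * hb + 2 * d₂' * hj
      generalize d₂' * (b - j) = c2 at h4
      omega
    · -- n < n', so n' ≥ n + 2
      have hk2 : 2 * k + 1 < 2 * k' + 1 := by
        rw [← hk, ← hk']; exact hlt2
      have hkk : k + 1 ≤ k' := by omega
      have hnp2 : n + 2 ≤ 2 * δ * d₂' - n := by
        rw [hk', hk]; omega
      have hmul : n * (n + 2) ≤ n * (2 * δ * d₂' - n) :=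
        mul_le_mul_of_nonneg_left hnp2 (by linarith)
      nlinarith
  exact ⟨2 * δ * d₂' - n, δ * (2 * δ * d₂' - n) - d₁, hn'pos, hlt, hn'odd,
    he_pos, hd₁dvd, hedvd, by ring⟩

/-- Let `δ ≥ 6` be a positive integer with `δ ≡ 2 (mod 4)`. Then there does not exist a positive
odd integer `n` and positive divisors `d₁, d₂` of `(n²+1)/2` with `d₁ + d₂ = δ·n`. -/
theorem stmt3 (δ : ℤ) (hδ6 : 6 ≤ δ) (hδ : δ % 4 = 2) :
    ¬ ∃ n d₁ d₂ : ℤ, 0 < n ∧ Odd n ∧ 0 < d₁ ∧ 0 < d₂ ∧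
      d₁ ∣ (n ^ 2 + 1) / 2 ∧ d₂ ∣ (n ^ 2 + 1) / 2 ∧ d₁ + d₂ = δ * n := by
  suffices H : ∀ N : ℕ, ∀ n d₁ d₂ : ℤ, n.toNat ≤ N → 0 < n → Odd n → 0 < d₁ → 0 < d₂ →
      d₁ ∣ (n ^ 2 + 1) / 2 → d₂ ∣ (n ^ 2 + 1) / 2 → d₁ + d₂ ≠ δ * n by
    rintro ⟨n, d₁, d₂, hn, hodd, hd₁, hd₂, h1, h2, hsum⟩
    exact H n.toNat n d₁ d₂ le_rfl hn hodd hd₁ hd₂ h1 h2 hsum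
  intro N
  induction N with
  | zero =>
    intro n _ _ hN hn _ _ _ _ _ _
    omega
  | succ N ih =>
    intro n d₁ d₂ hN hn hodd hd₁ hd₂ hdvd₁ hdvd₂ hsum
    by_cases h1 : n = 1
    · subst h1
      have hone : ((1 : ℤ) ^ 2 + 1) / 2 = 1 := by norm_num
      rw [hone] at hdvd₁ hdvd₂
      have e1 : d₁ = 1 := le_antisymm (Int.le_of_dvd one_pos hdvd₁) hd₁
      have e2 : d₂ = 1 := le_antisymm (Int.le_of_dvd one_pos hdvd₂) hd₂
      subst e1; subst e2
      omega
    · have hn3 : 3 ≤ n := by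
        obtain ⟨k, hk⟩ := hodd; omega
      rcases le_total d₁ d₂ with hle | hle
      · obtain ⟨n', e, hn'pos, hn'lt, hn'odd, hepos, hd1', he', hsum'⟩ :=
          step3 δ n d₁ d₂ hn3 hodd hd₁ hd₂ hle hdvd₁ hdvd₂ hsum
        exact ih n' d₁ e (by omega) hn'pos hn'odd hd₁ hepos hd1' he' hsum'
      · obtain ⟨n', e, hn'pos, hn'lt, hn'odd, hepos, hd2', he', hsum'⟩ :=
          step3 δ n d₂ d₁ hn3 hodd hd₂ hd₁ hle hdvd₂ hdvd₁ (by linarith)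
        exact ih n' d₂ e (by omega) hn'pos hn'odd hd₂ hepos hd2' he' hsum'
end

section
/- If n is a positive odd integer and d₁, d₂ are positive divisors of (n²+1)/2 with d₁ + d₂ = δn + ε for integers δ > 0 and ε, then either δ and ε are both odd, or δ ≡ ε + 2 ≡ 0 or 2 (mod 4). -/
/-!
Since `n` is odd, `(n² + 1)/2` is odd and divides `n² + 1`, so each `dᵢ` is an odd divisor of
`n² + 1`. Then `-1` is a square modulo every prime factor of `dᵢ`, which forces these primes to be
`≡ 1 (mod 4)`, hence `dᵢ ≡ 1 (mod 4)`. Thus `δ n + ε = d₁ + d₂ ≡ 2 (mod 4)`, and reading this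
congruence with `n` odd gives the two cases according to the parity of `δ`.
-/

theorem ZMod.isSquare_neg_one_of_dvd_sq_add_one {d : ℕ} {x : ℤ} (h : (d : ℤ) ∣ x ^ 2 + 1) :
    IsSquare (-1 : ZMod d) := by
  have hx : ((x ^ 2 + 1 : ℤ) : ZMod d) = 0 := (ZMod.intCast_zmod_eq_zero_iff_dvd _ _).mpr h
  push_cast at hx
  exact ⟨x, by linear_combination -hx⟩

theorem Nat.mod_four_eq_one_of_isSquare_neg_one {d : ℕ} (hd : Odd d)
    (hs : IsSquare (-1 : ZMod d)) : d % 4 = 1 := by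
  induction d using Nat.recOnMul with
  | zero => exact absurd hd Nat.not_odd_zero
  | one => rfl
  | prime p hp =>
    have : Fact p.Prime := ⟨hp⟩
    have h3 : p % 4 ≠ 3 := ZMod.exists_sq_eq_neg_one_iff.mp hs
    have h2 : p % 2 = 1 := Nat.odd_iff.mp hd
    omega
  | mul a b iha ihb =>
    obtain ⟨hao, hbo⟩ := Nat.odd_mul.mp hd
    have ha := iha hao (ZMod.isSquare_neg_one_of_dvd (dvd_mul_right a b) hs)
    have hb := ihb hbo (ZMod.isSquare_neg_one_of_dvd (dvd_mul_left b a) hs)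
    rw [Nat.mul_mod, ha, hb]

theorem Int.emod_four_eq_one_of_dvd_sq_add_one {d x : ℤ} (hd₀ : 0 < d) (hd : Odd d)
    (h : d ∣ x ^ 2 + 1) : d % 4 = 1 := by
  lift d to ℕ using hd₀.le
  exact_mod_cast Nat.mod_four_eq_one_of_isSquare_neg_one (by exact_mod_cast hd)
    (ZMod.isSquare_neg_one_of_dvd_sq_add_one h)

theorem Int.sq_add_one_div_two_of_odd {n : ℤ} (hn : Odd n) :
    Odd ((n ^ 2 + 1) / 2) ∧ (n ^ 2 + 1) / 2 ∣ n ^ 2 + 1 := by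
  obtain ⟨k, rfl⟩ := hn
  have hsplit : (2 * k + 1) ^ 2 + 1 = 2 * (2 * (k ^ 2 + k) + 1) := by ring
  rw [hsplit, Int.mul_ediv_cancel_left _ two_ne_zero]
  exact ⟨odd_two_mul_add_one _, dvd_mul_left _ _⟩

theorem Int.emod_four_eq_one_of_dvd_sq_add_one_div_two {d n : ℤ} (hn : Odd n) (hd₀ : 0 < d)
    (h : d ∣ (n ^ 2 + 1) / 2) : d % 4 = 1 := by
  obtain ⟨hodd, hdvd⟩ := Int.sq_add_one_div_two_of_odd hn
  have hd : Odd d := by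
    obtain ⟨c, hc⟩ := h
    exact (Int.odd_mul.mp (hc ▸ hodd)).1
  exact Int.emod_four_eq_one_of_dvd_sq_add_one hd₀ hd (h.trans hdvd)

theorem Int.parity_of_mul_add_emod_four_eq_two {n δ ε : ℤ} (hn : Odd n)
    (h : (δ * n + ε) % 4 = 2) :
    (Odd δ ∧ Odd ε) ∨
    ((δ % 4 = 0 ∧ (ε + 2) % 4 = 0) ∨ (δ % 4 = 2 ∧ (ε + 2) % 4 = 2)) := by
  obtain ⟨k, rfl⟩ := hn
  rcases Int.even_or_odd δ with ⟨j, rfl⟩ | hδ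
  · have hexp : (j + j) * (2 * k + 1) + ε = 4 * (j * k) + 2 * j + ε := by ring
    rw [hexp] at h
    omega
  · have hδn : Odd (δ * (2 * k + 1)) := hδ.mul (odd_two_mul_add_one k)
    refine Or.inl ⟨hδ, ?_⟩
    rw [Int.odd_iff] at hδn ⊢
    omega

theorem stmt5_general (n δ ε d₁ d₂ : ℤ) (hodd : Odd n)
    (h₁ : 0 < d₁) (h₂ : 0 < d₂)
    (hd₁ : d₁ ∣ (n ^ 2 + 1) / 2) (hd₂ : d₂ ∣ (n ^ 2 + 1) / 2)
    (hsum : d₁ + d₂ = δ * n + ε) :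
    (Odd δ ∧ Odd ε) ∨
    ((δ % 4 = 0 ∧ (ε + 2) % 4 = 0) ∨ (δ % 4 = 2 ∧ (ε + 2) % 4 = 2)) := by
  have h₁4 := Int.emod_four_eq_one_of_dvd_sq_add_one_div_two hodd h₁ hd₁
  have h₂4 := Int.emod_four_eq_one_of_dvd_sq_add_one_div_two hodd h₂ hd₂
  exact Int.parity_of_mul_add_emod_four_eq_two hodd (by omega)

/-- If `n` is a positive odd integer and `d₁, d₂` are positive divisors of `(n²+1)/2` with
`d₁ + d₂ = δ·n + ε` for integers `δ > 0` and `ε`, then either `δ` and `ε` are both odd, or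
`δ ≡ ε + 2 ≡ 0 or 2 (mod 4)`. -/
theorem stmt5 (n δ ε d₁ d₂ : ℤ) (hn : 0 < n) (hodd : Odd n) (hδ : 0 < δ)
    (h₁ : 0 < d₁) (h₂ : 0 < d₂)
    (hd₁ : d₁ ∣ (n ^ 2 + 1) / 2) (hd₂ : d₂ ∣ (n ^ 2 + 1) / 2)
    (hsum : d₁ + d₂ = δ * n + ε) :
    (Odd δ ∧ Odd ε) ∨
    ((δ % 4 = 0 ∧ (ε + 2) % 4 = 0) ∨ (δ % 4 = 2 ∧ (ε + 2) % 4 = 2)) :=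
  stmt5_general n δ ε d₁ d₂ hodd h₁ h₂ hd₁ hd₂ hsum
end

section
/- For every positive integer d, the continued fraction expansion of √(2d(2d−1)) is [2d−1; overline{2, 4d−2}], i.e. it is periodic with period (2, 4d−2) after the initial term 2d−1. -/
/-!
Put `x = √(m(m+1))` for a positive integer `m` (here `m = 2d − 1`). Since `(x − m)(x + m) = m`,
`(x − m)⁻¹ = 2 + (x − m)/m` and `((x − m)/m)⁻¹ = x + m = 2m + (x − m)`, with both fractional
parts in `(0, 1)`. So the fractional part `x − m` recurs after two steps of the continued fraction
algorithm, and `x = [m; 2, 2m, 2, 2m, …]`.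
-/

namespace GenContFract

variable {K : Type*} [DivisionRing K] [LinearOrder K] [FloorRing K]

theorem IntFractPair.of_intCast_add [IsStrictOrderedRing K] (n : ℤ) {r : K} (hr₀ : 0 ≤ r)
    (hr₁ : r < 1) : IntFractPair.of ((n : K) + r) = ⟨n, r⟩ := by
  simp [IntFractPair.of, Int.floor_intCast_add, Int.fract_intCast_add, Int.floor_eq_zero_iff,
    Int.fract_eq_self, hr₀, hr₁]

theorem IntFractPair.stream_add_two_mul {v f g : K} {a b c : ℤ} {n : ℕ}
    (hn : IntFractPair.stream v n = some ⟨a, f⟩) (hf : f ≠ 0) (hg : g ≠ 0)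
    (hfg : IntFractPair.of f⁻¹ = ⟨b, g⟩) (hgf : IntFractPair.of g⁻¹ = ⟨c, f⟩) (k : ℕ) :
    IntFractPair.stream v (n + 2 * k + 1) = some ⟨b, g⟩ ∧
      IntFractPair.stream v (n + 2 * k + 2) = some ⟨c, f⟩ := by
  have step {i : ℕ} {p : IntFractPair K} (h : IntFractPair.stream v i = some p) (hp : p.fr ≠ 0) :
      IntFractPair.stream v (i + 1) = some (IntFractPair.of p.fr⁻¹) :=
    IntFractPair.stream_succ_of_some h hp
  induction k with
  | zero =>
    have h₁ : IntFractPair.stream v (n + 1) = some ⟨b, g⟩ := hfg ▸ step hn hf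
    exact ⟨h₁, hgf ▸ step h₁ hg⟩
  | succ k ih =>
    have h₁ : IntFractPair.stream v (n + 2 * (k + 1) + 1) = some ⟨b, g⟩ := hfg ▸ step ih.2 hf
    exact ⟨h₁, hgf ▸ step h₁ hg⟩

theorem partDens_get?_of_periodic_two {v f g : K} {a b c : ℤ}
    (hv : IntFractPair.of v = ⟨a, f⟩) (hf : f ≠ 0) (hg : g ≠ 0)
    (hfg : IntFractPair.of f⁻¹ = ⟨b, g⟩) (hgf : IntFractPair.of g⁻¹ = ⟨c, f⟩) (k : ℕ) :
    (GenContFract.of v).partDens.get? (2 * k) = some (b : K) ∧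
      (GenContFract.of v).partDens.get? (2 * k + 1) = some (c : K) := by
  obtain ⟨h₁, h₂⟩ := IntFractPair.stream_add_two_mul
    ((IntFractPair.stream_zero v).trans (congrArg some hv)) hf hg hfg hgf k
  rw [zero_add] at h₁ h₂
  exact ⟨partDen_eq_s_b (get?_of_eq_some_of_succ_get?_intFractPair_stream h₁),
    partDen_eq_s_b (get?_of_eq_some_of_succ_get?_intFractPair_stream h₂)⟩

end GenContFract

namespace Real

variable {m : ℝ}

theorem sqrt_mul_succ_sub_mul_add (hm : 0 ≤ m) :
    (√(m * (m + 1)) - m) * (√(m * (m + 1)) + m) = m := by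
  linear_combination Real.mul_self_sqrt (by positivity : 0 ≤ m * (m + 1))

theorem le_sqrt_mul_succ (hm : 0 ≤ m) : m ≤ √(m * (m + 1)) :=
  Real.le_sqrt_of_sq_le (by nlinarith)

theorem lt_sqrt_mul_succ (hm : 0 < m) : m < √(m * (m + 1)) :=
  (Real.lt_sqrt hm.le).2 (by nlinarith)

theorem sqrt_mul_succ_lt (hm : 0 ≤ m) : √(m * (m + 1)) < m + 1 :=
  (Real.sqrt_lt' (by linarith)).2 (by nlinarith)

end Real

namespace GenContFract

open Real

theorem IntFractPair.of_sqrt_mul_succ (m : ℕ) :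
    IntFractPair.of √(m * (m + 1) : ℝ) = ⟨m, √(m * (m + 1)) - m⟩ := by
  simpa using IntFractPair.of_intCast_add (m : ℤ)
    (sub_nonneg.2 (le_sqrt_mul_succ m.cast_nonneg))
    (sub_lt_iff_lt_add'.2 (sqrt_mul_succ_lt m.cast_nonneg))

theorem IntFractPair.of_inv_sqrt_mul_succ_sub {m : ℕ} (hm : 0 < m) :
    IntFractPair.of (√(m * (m + 1) : ℝ) - m)⁻¹ = ⟨2, (√(m * (m + 1)) - m) / m⟩ := by
  have hm₀ : (0 : ℝ) < m := by exact_mod_cast hm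
  have hm₁ : (1 : ℝ) ≤ m := by exact_mod_cast hm
  have hlo := lt_sqrt_mul_succ hm₀
  have hhi := sqrt_mul_succ_lt hm₀.le
  have hinv : (√(m * (m + 1) : ℝ) - m)⁻¹ = ((2 : ℤ) : ℝ) + (√(m * (m + 1)) - m) / m := by
    refine inv_eq_of_mul_eq_one_right ?_
    field_simp
    linear_combination sqrt_mul_succ_sub_mul_add hm₀.le
  rw [hinv]
  exact IntFractPair.of_intCast_add 2 (div_nonneg (by linarith) hm₀.le)
    ((div_lt_one hm₀).2 (by linarith))

theorem IntFractPair.of_inv_sqrt_mul_succ_sub_div {m : ℕ} (hm : 0 < m) :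
    IntFractPair.of ((√(m * (m + 1) : ℝ) - m) / m)⁻¹ = ⟨2 * m, √(m * (m + 1)) - m⟩ := by
  have hm₀ : (0 : ℝ) < m := by exact_mod_cast hm
  have hlo := lt_sqrt_mul_succ hm₀
  have hhi := sqrt_mul_succ_lt hm₀.le
  have hinv : ((√(m * (m + 1) : ℝ) - m) / m)⁻¹ = ((2 * m : ℤ) : ℝ) + (√(m * (m + 1)) - m) := by
    refine inv_eq_of_mul_eq_one_right ?_
    push_cast
    field_simp
    linear_combination sqrt_mul_succ_sub_mul_add hm₀.le
  rw [hinv]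
  exact IntFractPair.of_intCast_add _ (by linarith) (by linarith)

theorem of_sqrt_mul_succ_h (m : ℕ) : (GenContFract.of √(m * (m + 1) : ℝ)).h = m := by
  rw [of_h_eq_floor, show ⌊√(m * (m + 1) : ℝ)⌋ = m from
    congrArg IntFractPair.b (IntFractPair.of_sqrt_mul_succ m)]
  exact Int.cast_natCast m

theorem of_sqrt_mul_succ_partDens_get? {m : ℕ} (hm : 0 < m) (k : ℕ) :
    (GenContFract.of √(m * (m + 1) : ℝ)).partDens.get? (2 * k) = some (2 : ℝ) ∧
      (GenContFract.of √(m * (m + 1) : ℝ)).partDens.get? (2 * k + 1) = some (2 * (m : ℝ)) := by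
  have hm₀ : (0 : ℝ) < m := by exact_mod_cast hm
  have hf : √(m * (m + 1) : ℝ) - m ≠ 0 := (sub_pos.2 (lt_sqrt_mul_succ hm₀)).ne'
  simpa using partDens_get?_of_periodic_two (IntFractPair.of_sqrt_mul_succ m) hf
    (div_ne_zero hf hm₀.ne') (IntFractPair.of_inv_sqrt_mul_succ_sub hm)
    (IntFractPair.of_inv_sqrt_mul_succ_sub_div hm) k

end GenContFract

/-- For every positive integer `d`, the continued fraction expansion of `√(2d(2d−1))`
is `[2d−1; 2, 4d−2, 2, 4d−2, …]`, periodic with period `(2, 4d−2)`. -/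
theorem stmt6 (d : ℕ) (hd : 0 < d) :
    (GenContFract.of (Real.sqrt (2 * d * (2 * d - 1)))).h = 2 * (d : ℝ) - 1 ∧
    ∀ n : ℕ,
      (GenContFract.of (Real.sqrt (2 * d * (2 * d - 1)))).partDens.get? (2 * n)
        = some (2 : ℝ) ∧
      (GenContFract.of (Real.sqrt (2 * d * (2 * d - 1)))).partDens.get? (2 * n + 1)
        = some (4 * (d : ℝ) - 2) := by
  have hcast : ((2 * d - 1 : ℕ) : ℝ) = 2 * d - 1 := by
    rw [Nat.cast_sub (by omega)]
    push_cast
    ring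
  have hv : (2 * d * (2 * d - 1) : ℝ) = (2 * d - 1 : ℕ) * ((2 * d - 1 : ℕ) + 1) := by
    rw [hcast]
    ring
  rw [hv]
  refine ⟨(GenContFract.of_sqrt_mul_succ_h _).trans hcast, fun n => ?_⟩
  obtain ⟨h₀, h₁⟩ := GenContFract.of_sqrt_mul_succ_partDens_get? (by omega : 0 < 2 * d - 1) n
  refine ⟨h₀, h₁.trans (congrArg some ?_)⟩
  rw [hcast]
  ring
end

section
/- For every positive integer d, the fundamental (least positive) solution of the Pell equation U² − 2d(2d−1)V² = 1 is (U, V) = (4d−1, 2). -/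
/-- For every positive integer `d`, the fundamental solution of the Pell equation
`U² − 2d(2d−1)·V² = 1` is `(U, V) = (4d−1, 2)`. -/
theorem stmt7 (d : ℤ) (hd : 0 < d) :
    Pell.IsFundamental
      (Pell.Solution₁.mk (4 * d - 1) 2 (by ring) : Pell.Solution₁ (2 * d * (2 * d - 1))) := by
  refine ⟨by simp [Pell.Solution₁.x_mk]; omega, by simp [Pell.Solution₁.y_mk], ?_⟩
  intro b hb
  have hp := b.prop
  set x := b.x with hx
  set y := b.y with hy
  simp only [Pell.Solution₁.x_mk]
  have habs := abs_nonneg y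
  have hy2 : y ^ 2 = 0 ∨ y ^ 2 = 1 ∨ 4 ≤ y ^ 2 := by
    rcases le_or_gt 2 |y| with h | h
    · right; right; nlinarith [sq_abs y]
    · have h01 : |y| = 0 ∨ |y| = 1 := by omega
      rcases h01 with h0 | h1
      · left; nlinarith [sq_abs y]
      · right; left; nlinarith [sq_abs y]
  rcases hy2 with h0 | h1 | h4
  · rw [h0] at hp
    nlinarith [sq_nonneg (x - 1)]
  · rw [h1] at hp
    have hx1 : x < 2 * d := by nlinarith [sq_nonneg (x - 2 * d)]
    have hx2 : 2 * d - 1 < x := by nlinarith [sq_nonneg (x - (2 * d - 1))]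
    omega
  · have hD : 0 ≤ 2 * d * (2 * d - 1) := by nlinarith
    nlinarith [mul_nonneg hD (by linarith : (0:ℤ) ≤ y ^ 2 - 4), sq_nonneg (x - (4 * d - 1)), sq_nonneg (x + (4 * d - 1))]
end

section
/- For every positive integer d, the continued fraction expansion of √(2d(8d−1)) is [4d−1; overline{1, 2, 1, 8d−2}]. -/
/-!
The complete quotients of `√N`, `N = 2d(8d − 1)`, are `(P n + √N) / Q n` for integers with
`P (n + 1) = a n * Q n - P n` and `Q n * Q (n + 1) = N - P (n + 1) ^ 2`, where `a n` is the `n`-th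
partial quotient. From `(P 0, Q 0) = (0, 1)` and `a 0 = 4d − 1` the pairs `(P, Q)` enter the cycle
`(4d − 1, 6d − 1), (2d, 2d), (2d, 6d − 1), (4d − 1, 1)`, along which the partial quotients are
`1, 2, 1, 8d − 2`. These are the true partial quotients because every later complete quotient
exceeds `1`, i.e. `Q n - P n ≤ 4d − 1 < √N`.
-/

open GenContFract

theorem add_div_eq_add_inv_add_div {K : Type*} [Field K] {s P Q P' Q' : K} (a : K) (hQ : Q ≠ 0)
    (hs : P' + s ≠ 0) (hP : P' = a * Q - P) (hQQ : Q * Q' = s ^ 2 - P' ^ 2) :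
    (P + s) / Q = a + ((P' + s) / Q')⁻¹ := by
  rw [inv_div, div_eq_iff hQ, add_mul, div_mul_eq_mul_div, ← sub_eq_iff_eq_add', eq_div_iff hs]
  linear_combination (P' + s) * hP - hQQ

theorem Int.floor_eq_and_fract_eq_of_eq_add_inv {K : Type*} [Field K] [LinearOrder K]
    [IsStrictOrderedRing K] [FloorRing K] {x y : K} {a : ℤ} (hy : 1 < y) (hx : x = a + y⁻¹) :
    ⌊x⌋ = a ∧ Int.fract x = y⁻¹ := by
  have hpos : 0 < y⁻¹ := inv_pos.mpr (zero_lt_one.trans hy)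
  have hlt : y⁻¹ < 1 := inv_lt_one_of_one_lt₀ hy
  have hfloor : ⌊x⌋ = a := Int.floor_eq_iff.mpr ⟨by rw [hx]; linarith, by rw [hx]; linarith⟩
  exact ⟨hfloor, by rw [Int.fract, hfloor, hx]; abel⟩

namespace GenContFract

variable {K : Type*} [Field K] [LinearOrder K] [FloorRing K]

theorem partDens_get?_zero_of_fract_ne_zero {v : K} (hv : Int.fract v ≠ 0) :
    (GenContFract.of v).partDens.get? 0 = some (⌊(Int.fract v)⁻¹⌋ : K) := by
  have hhead : (GenContFract.of v).s.get? 0 = some ⟨1, ⌊(Int.fract v)⁻¹⌋⟩ := of_s_head hv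
  simp [partDens, Stream'.Seq.map_get?, hhead]

variable [IsStrictOrderedRing K]

theorem partDens_get?_succ (v : K) (n : ℕ) :
    (GenContFract.of v).partDens.get? (n + 1) =
      (GenContFract.of (Int.fract v)⁻¹).partDens.get? n := by
  simp only [partDens, Stream'.Seq.map_get?, of_s_succ]

theorem of_h_eq_of_eq_add_inv {ξ : ℕ → K} {a : ℕ → ℤ} (hξ : ∀ n, ξ n = a n + (ξ (n + 1))⁻¹)
    (hone : ∀ n, 1 < ξ (n + 1)) : (GenContFract.of (ξ 0)).h = a 0 := by
  rw [of_h_eq_floor, (Int.floor_eq_and_fract_eq_of_eq_add_inv (hone 0) (hξ 0)).1]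

theorem partDens_get?_of_eq_add_inv {ξ : ℕ → K} {a : ℕ → ℤ}
    (hξ : ∀ n, ξ n = a n + (ξ (n + 1))⁻¹) (hone : ∀ n, 1 < ξ (n + 1)) (n : ℕ) :
    (GenContFract.of (ξ 0)).partDens.get? n = some (a (n + 1) : K) := by
  obtain ⟨-, hfract⟩ := Int.floor_eq_and_fract_eq_of_eq_add_inv (hone 0) (hξ 0)
  induction n generalizing ξ a with
  | zero =>
    have hfloor := (Int.floor_eq_and_fract_eq_of_eq_add_inv (hone 1) (hξ 1)).1
    rw [partDens_get?_zero_of_fract_ne_zero (hfract ▸ inv_ne_zero (zero_lt_one.trans (hone 0)).ne'),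
      hfract, inv_inv, hfloor]
  | succ n ih =>
    rw [partDens_get?_succ, hfract, inv_inv]
    exact ih (fun n ↦ hξ (n + 1)) (fun n ↦ hone (n + 1))
      (Int.floor_eq_and_fract_eq_of_eq_add_inv (hone 1) (hξ 1)).2

end GenContFract

namespace SqrtTwoDMulEightDSubOne

variable (d : ℕ)

def P : ℕ → ℤ
  | 0 => 0
  | n + 1 =>
    match n % 4 with
    | 0 => 4 * d - 1
    | 1 => 2 * d
    | 2 => 2 * d
    | _ => 4 * d - 1

def Q : ℕ → ℤ
  | 0 => 1
  | n + 1 =>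
    match n % 4 with
    | 0 => 6 * d - 1
    | 1 => 2 * d
    | 2 => 6 * d - 1
    | _ => 1

def partialQuotient : ℕ → ℤ
  | 0 => 4 * d - 1
  | n + 1 =>
    match n % 4 with
    | 0 => 1
    | 1 => 2
    | 2 => 1
    | _ => 8 * d - 2

theorem mod_four_cases (n : ℕ) :
    n % 4 = 0 ∧ (n + 1) % 4 = 1 ∨ n % 4 = 1 ∧ (n + 1) % 4 = 2 ∨
      n % 4 = 2 ∧ (n + 1) % 4 = 3 ∨ n % 4 = 3 ∧ (n + 1) % 4 = 0 := by
  omega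

theorem P_succ (n : ℕ) : P d (n + 1) = partialQuotient d n * Q d n - P d n := by
  cases n with
  | zero => simp [P, Q, partialQuotient]
  | succ n =>
    rcases mod_four_cases n with ⟨h, h'⟩ | ⟨h, h'⟩ | ⟨h, h'⟩ | ⟨h, h'⟩ <;>
      simp only [P, Q, partialQuotient, h, h'] <;> ring

theorem Q_mul_Q_succ (n : ℕ) :
    Q d n * Q d (n + 1) = 2 * d * (8 * d - 1) - P d (n + 1) ^ 2 := by
  cases n with
  | zero => simp only [P, Q, Nat.zero_mod]; ring
  | succ n =>
    rcases mod_four_cases n with ⟨h, h'⟩ | ⟨h, h'⟩ | ⟨h, h'⟩ | ⟨h, h'⟩ <;>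
      simp only [P, Q, h, h'] <;> ring

variable {d}

theorem Q_succ_pos (hd : 0 < d) (n : ℕ) : 0 < Q d (n + 1) := by
  rcases mod_four_cases n with ⟨h, -⟩ | ⟨h, -⟩ | ⟨h, -⟩ | ⟨h, -⟩ <;> simp only [Q, h] <;> omega

theorem Q_succ_sub_P_succ_le (hd : 0 < d) (n : ℕ) : Q d (n + 1) - P d (n + 1) ≤ 4 * d - 1 := by
  rcases mod_four_cases n with ⟨h, -⟩ | ⟨h, -⟩ | ⟨h, -⟩ | ⟨h, -⟩ <;> simp only [P, Q, h] <;> omega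

theorem zero_le_P (hd : 0 < d) (n : ℕ) : 0 ≤ P d n := by
  cases n with
  | zero => simp [P]
  | succ n =>
    rcases mod_four_cases n with ⟨h, -⟩ | ⟨h, -⟩ | ⟨h, -⟩ | ⟨h, -⟩ <;> simp only [P, h] <;> omega

theorem Q_pos (hd : 0 < d) (n : ℕ) : 0 < Q d n := by
  cases n with
  | zero => simp [Q]
  | succ n => exact Q_succ_pos hd n

theorem sq_sqrt (hd : 0 < d) : √(2 * d * (8 * d - 1) : ℝ) ^ 2 = 2 * d * (8 * d - 1) := by
  have hD : (1 : ℝ) ≤ d := by exact_mod_cast hd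
  exact Real.sq_sqrt (by nlinarith)

theorem four_mul_sub_one_lt_sqrt (hd : 0 < d) : 4 * (d : ℝ) - 1 < √(2 * d * (8 * d - 1)) := by
  have hD : (1 : ℝ) ≤ d := by exact_mod_cast hd
  rw [Real.lt_sqrt (by linarith)]
  nlinarith

variable (d) in
noncomputable def completeQuotient (n : ℕ) : ℝ := (P d n + √(2 * d * (8 * d - 1))) / Q d n

theorem completeQuotient_zero : completeQuotient d 0 = √(2 * d * (8 * d - 1)) := by
  simp [completeQuotient, P, Q]

theorem completeQuotient_eq_add_inv (hd : 0 < d) (n : ℕ) :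
    completeQuotient d n = partialQuotient d n + (completeQuotient d (n + 1))⁻¹ := by
  have hD : (1 : ℝ) ≤ d := by exact_mod_cast hd
  have hs := four_mul_sub_one_lt_sqrt hd
  have hP : (0 : ℝ) ≤ P d (n + 1) := by exact_mod_cast zero_le_P hd (n + 1)
  refine add_div_eq_add_inv_add_div _ (by exact_mod_cast (Q_pos hd n).ne') (by linarith)
    (by exact_mod_cast P_succ d n) ?_
  rw [sq_sqrt hd]
  exact_mod_cast Q_mul_Q_succ d n

theorem one_lt_completeQuotient_succ (hd : 0 < d) (n : ℕ) : 1 < completeQuotient d (n + 1) := by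
  have hs := four_mul_sub_one_lt_sqrt hd
  have hQ : (0 : ℝ) < Q d (n + 1) := by exact_mod_cast Q_succ_pos hd n
  have hQP : (Q d (n + 1) : ℝ) - P d (n + 1) ≤ 4 * d - 1 := by
    exact_mod_cast Q_succ_sub_P_succ_le hd n
  rw [completeQuotient, one_lt_div hQ]
  linarith

end SqrtTwoDMulEightDSubOne

open SqrtTwoDMulEightDSubOne in
/-- For every positive integer `d`, the continued fraction expansion of `√(2d(8d−1))`
is `[4d−1; 1, 2, 1, 8d−2, 1, 2, 1, 8d−2, …]`, periodic with period `(1, 2, 1, 8d−2)`. -/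
theorem stmt9 (d : ℕ) (hd : 0 < d) :
    (GenContFract.of (Real.sqrt (2 * d * (8 * d - 1)))).h = 4 * (d : ℝ) - 1 ∧
    ∀ n : ℕ,
      (GenContFract.of (Real.sqrt (2 * d * (8 * d - 1)))).partDens.get? (4 * n)
        = some (1 : ℝ) ∧
      (GenContFract.of (Real.sqrt (2 * d * (8 * d - 1)))).partDens.get? (4 * n + 1)
        = some (2 : ℝ) ∧
      (GenContFract.of (Real.sqrt (2 * d * (8 * d - 1)))).partDens.get? (4 * n + 2)
        = some (1 : ℝ) ∧
      (GenContFract.of (Real.sqrt (2 * d * (8 * d - 1)))).partDens.get? (4 * n + 3)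
        = some (8 * (d : ℝ) - 2) := by
  have hξ := completeQuotient_eq_add_inv hd
  have hone := one_lt_completeQuotient_succ hd
  rw [← completeQuotient_zero]
  refine ⟨?_, fun n ↦ ⟨?_, ?_, ?_, ?_⟩⟩
  · rw [of_h_eq_of_eq_add_inv hξ hone]
    simp [partialQuotient]
  all_goals
    rw [partDens_get?_of_eq_add_inv hξ hone]
    simp [partialQuotient, Nat.add_mod]
end

section
/- For every positive integer d, the fundamental solution of the Pell equation W² − 2d(8d−1)Z² = 1 is (W, Z) = (16d−1, 4). -/
/-- For every positive integer `d`, the fundamental solution of the Pell equation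
`W² − 2d(8d−1)·Z² = 1` is `(W, Z) = (16d−1, 4)`. -/
theorem stmt10 (d : ℤ) (hd : 0 < d) :
    Pell.IsFundamental
      (Pell.Solution₁.mk (16 * d - 1) 4 (by ring) : Pell.Solution₁ (2 * d * (8 * d - 1))) := by
  have hd1 : 1 ≤ d := hd
  refine ⟨by simp [Pell.Solution₁.x_mk]; nlinarith, by simp [Pell.Solution₁.y_mk], ?_⟩
  intro b hb
  rw [Pell.Solution₁.x_mk]
  have hprop := b.prop
  have hx1 : 1 < b.x := hb
  have hy : b.y ≠ 0 := by
    intro h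
    rw [h] at hprop
    nlinarith
  have h16 : 16 ≤ b.y ^ 2 := by
    by_contra hlt
    push_neg at hlt
    have h1 : -3 ≤ b.y := by nlinarith
    have h2 : b.y ≤ 3 := by nlinarith
    interval_cases b.y <;> simp_all <;>
      rcases le_or_gt b.x (4 * d - 1) with h | h <;>
      rcases le_or_gt b.x (8 * d - 1) with h' | h' <;>
      rcases le_or_gt b.x (12 * d - 1) with h'' | h'' <;>
      nlinarith
  by_contra hcon
  push_neg at hcon
  have hle : b.x ≤ 16 * d - 2 := by omega
  have hD : 0 ≤ 2 * d * (8 * d - 1) := by nlinarith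
  have h1 : 2 * d * (8 * d - 1) * 16 ≤ 2 * d * (8 * d - 1) * b.y ^ 2 :=
    mul_le_mul_of_nonneg_left h16 hD
  have h2 : b.x * b.x ≤ (16 * d - 2) * (16 * d - 2) :=
    mul_le_mul hle hle (by linarith) (by linarith)
  nlinarith
end

section
/- For ε ≡ 0 (mod 4), set n = (ε² − 3ε + 6)/2, d₁ = 1 and d₂ = ε² − 2ε + 5. Then n is a positive odd integer, d₁ and d₂ divide (n²+1)/2, and d₁ + d₂ = 2n + ε. -/
/-- For `ε ≡ 0 (mod 4)`, set `n = (ε² − 3ε + 6)/2`, `d₁ = 1`, `d₂ = ε² − 2ε + 5`.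
Then `n` is a positive odd integer, `d₁, d₂` divide `(n²+1)/2`, and `d₁ + d₂ = 2n + ε`. -/
theorem stmt12 (ε : ℤ) (hε : ε % 4 = 0) :
    let n := (ε ^ 2 - 3 * ε + 6) / 2
    let d₁ : ℤ := 1
    let d₂ := ε ^ 2 - 2 * ε + 5
    0 < n ∧ Odd n ∧ d₁ ∣ (n ^ 2 + 1) / 2 ∧ d₂ ∣ (n ^ 2 + 1) / 2 ∧
      d₁ + d₂ = 2 * n + ε := by
  obtain ⟨k, rfl⟩ : (4:ℤ) ∣ ε := by omega
  intro n d₁ d₂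
  have hn : n = 8 * k ^ 2 - 6 * k + 3 := by
    show ((4*k) ^ 2 - 3 * (4*k) + 6) / 2 = _
    have h : (4*k) ^ 2 - 3 * (4*k) + 6 = 2 * (8 * k ^ 2 - 6 * k + 3) := by ring
    rw [h, Int.mul_ediv_cancel_left _ (by norm_num)]
  have hh : (n ^ 2 + 1) / 2 = 32*k^4 - 48*k^3 + 42*k^2 - 18*k + 5 := by
    rw [hn]
    have h : (8 * k ^ 2 - 6 * k + 3) ^ 2 + 1
        = 2 * (32*k^4 - 48*k^3 + 42*k^2 - 18*k + 5) := by ring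
    rw [h, Int.mul_ediv_cancel_left _ (by norm_num)]
  refine ⟨?_, ?_, one_dvd _, ?_, ?_⟩
  · rw [hn]; nlinarith [sq_nonneg (4*k - 2), sq_nonneg k]
  · exact ⟨4 * k ^ 2 - 3 * k + 1, by rw [hn]; ring⟩
  · exact ⟨2 * k ^ 2 - 2 * k + 1, by rw [hh]; show _ = ((4*k)^2 - 2*(4*k) + 5) * (2 * k ^ 2 - 2 * k + 1); ring⟩
  · show 1 + ((4*k)^2 - 2*(4*k) + 5) = 2 * n + 4*k
    rw [hn]; ring
end

section
/- For ε ≡ 0 (mod 4), set n = (ε⁴ − 6ε³ + 20ε² − 33ε + 34)/2, d₁ = ε² − 2ε + 5 and d₂ = ε⁴ − 6ε³ + 19ε² − 30ε + 29. Then n is a positive odd integer, d₁ and d₂ divide (n²+1)/2, and d₁ + d₂ = 2n + ε. -/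
/-- For `ε ≡ 0 (mod 4)`, set `n = (ε⁴ − 6ε³ + 20ε² − 33ε + 34)/2`, `d₁ = ε² − 2ε + 5`,
`d₂ = ε⁴ − 6ε³ + 19ε² − 30ε + 29`. Then `n` is a positive odd integer, `d₁, d₂` divide
`(n²+1)/2`, and `d₁ + d₂ = 2n + ε`. -/
theorem stmt13 (ε : ℤ) (hε : ε % 4 = 0) :
    let n := (ε ^ 4 - 6 * ε ^ 3 + 20 * ε ^ 2 - 33 * ε + 34) / 2
    let d₁ := ε ^ 2 - 2 * ε + 5
    let d₂ := ε ^ 4 - 6 * ε ^ 3 + 19 * ε ^ 2 - 30 * ε + 29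
    0 < n ∧ Odd n ∧ d₁ ∣ (n ^ 2 + 1) / 2 ∧ d₂ ∣ (n ^ 2 + 1) / 2 ∧
      d₁ + d₂ = 2 * n + ε := by
  obtain ⟨k, rfl⟩ : ∃ k, ε = 4 * k := ⟨ε / 4, by omega⟩
  intro n d₁ d₂
  have hn : n = 128 * k ^ 4 - 192 * k ^ 3 + 160 * k ^ 2 - 66 * k + 17 := by
    show ((4*k) ^ 4 - 6 * (4*k) ^ 3 + 20 * (4*k) ^ 2 - 33 * (4*k) + 34) / 2 = _
    rw [show (4*k) ^ 4 - 6 * (4*k) ^ 3 + 20 * (4*k) ^ 2 - 33 * (4*k) + 34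
        = 2 * (128 * k ^ 4 - 192 * k ^ 3 + 160 * k ^ 2 - 66 * k + 17) by ring]
    exact Int.mul_ediv_cancel_left _ two_ne_zero
  have hm : (n ^ 2 + 1) / 2
      = 8192 * k ^ 8 - 24576 * k ^ 7 + 38912 * k ^ 6 - 39168 * k ^ 5 + 27648 * k ^ 4
        - 13824 * k ^ 3 + 4898 * k ^ 2 - 1122 * k + 145 := by
    rw [hn]
    rw [show (128 * k ^ 4 - 192 * k ^ 3 + 160 * k ^ 2 - 66 * k + 17) ^ 2 + 1
        = 2 * (8192 * k ^ 8 - 24576 * k ^ 7 + 38912 * k ^ 6 - 39168 * k ^ 5 + 27648 * k ^ 4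
        - 13824 * k ^ 3 + 4898 * k ^ 2 - 1122 * k + 145) by ring]
    exact Int.mul_ediv_cancel_left _ two_ne_zero
  refine ⟨?_, ?_, ?_, ?_, ?_⟩
  · rw [hn]; nlinarith [sq_nonneg k, sq_nonneg (k-1), sq_nonneg (k^2 - k), sq_nonneg (8*k^2 - 6*k)]
  · rw [hn]; exact ⟨64 * k ^ 4 - 96 * k ^ 3 + 80 * k ^ 2 - 33 * k + 8, by ring⟩
  · refine ⟨512 * k ^ 6 - 1280 * k ^ 5 + 1632 * k ^ 4 - 1232 * k ^ 3 + 602 * k ^ 2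
      - 178 * k + 29, ?_⟩
    rw [hm]; show _ = ((4*k) ^ 2 - 2 * (4*k) + 5) * _; ring
  · refine ⟨32 * k ^ 4 - 48 * k ^ 3 + 42 * k ^ 2 - 18 * k + 5, ?_⟩
    rw [hm]
    show _ = ((4*k) ^ 4 - 6 * (4*k) ^ 3 + 19 * (4*k) ^ 2 - 30 * (4*k) + 29) * _; ring
  · show ((4*k) ^ 2 - 2 * (4*k) + 5) + ((4*k) ^ 4 - 6 * (4*k) ^ 3 + 19 * (4*k) ^ 2 - 30 * (4*k) + 29) = 2 * n + 4 * k
    rw [hn]; ring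
end

section
/- For ε ≡ 6 (mod 8), set n = (ε² − 3ε + 18)/4, d₁ = 1 and d₂ = ε² − 2ε + 17. Then n is a positive odd integer, d₁ and d₂ divide (n²+1)/2, and d₁ + d₂ = 4n + ε. -/
/-- For `ε ≡ 6 (mod 8)`, set `n = (ε² − 3ε + 18)/4`, `d₁ = 1`, `d₂ = ε² − 2ε + 17`.
Then `n` is a positive odd integer, `d₁, d₂` divide `(n²+1)/2`, and `d₁ + d₂ = 4n + ε`. -/
theorem stmt14 (ε : ℤ) (hε : ε % 8 = 6) :
    let n := (ε ^ 2 - 3 * ε + 18) / 4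
    let d₁ : ℤ := 1
    let d₂ := ε ^ 2 - 2 * ε + 17
    0 < n ∧ Odd n ∧ d₁ ∣ (n ^ 2 + 1) / 2 ∧ d₂ ∣ (n ^ 2 + 1) / 2 ∧
      d₁ + d₂ = 4 * n + ε := by
  obtain ⟨k, rfl⟩ : ∃ k, ε = 8 * k + 6 := ⟨(ε - 6) / 8, by omega⟩
  intro n d₁ d₂
  have hn : n = 16 * k ^ 2 + 18 * k + 9 := by
    show ((8 * k + 6) ^ 2 - 3 * (8 * k + 6) + 18) / 4 = _
    have : (8 * k + 6) ^ 2 - 3 * (8 * k + 6) + 18 = 4 * (16 * k ^ 2 + 18 * k + 9) := by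
      ring
    rw [this, Int.mul_ediv_cancel_left _ (by norm_num)]
  have hm : (n ^ 2 + 1) / 2 = (64 * k ^ 2 + 80 * k + 41) * (2 * k ^ 2 + 2 * k + 1) := by
    rw [hn]
    have : (16 * k ^ 2 + 18 * k + 9 : ℤ) ^ 2 + 1 =
        2 * ((64 * k ^ 2 + 80 * k + 41) * (2 * k ^ 2 + 2 * k + 1)) := by ring
    rw [this, Int.mul_ediv_cancel_left _ (by norm_num)]
  refine ⟨?_, ?_, one_dvd _, ?_, ?_⟩
  · rw [hn]; nlinarith [sq_nonneg k, sq_nonneg (4 * k + 2)]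
  · exact ⟨8 * k ^ 2 + 9 * k + 4, by rw [hn]; ring⟩
  · rw [hm]
    refine ⟨2 * k ^ 2 + 2 * k + 1, ?_⟩
    show _ = ((8*k+6)^2 - 2*(8*k+6) + 17) * _
    ring
  · show 1 + ((8*k+6)^2 - 2*(8*k+6) + 17) = 4 * n + (8*k+6)
    rw [hn]; ring
end

section
/- For every nonnegative integer k, set n = 64k⁴ + 28k² + 7, ε = 8k + 2, d₁ = ε²/4 + 4 = 16k² + 8k + 5, and d₂ = d₁² − 16k·d₁. Then n is odd, d₁ and d₂ are positive divisors of (n²+1)/2, and d₁ + d₂ = 4n + ε. -/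
/-- For every nonnegative integer `k`, set `n = 64k⁴ + 28k² + 7`, `ε = 8k + 2`,
`d₁ = ε²/4 + 4 = 16k² + 8k + 5`, `d₂ = d₁² − 16k·d₁`. Then `n` is odd, `d₁` and `d₂` are
positive divisors of `(n²+1)/2`, and `d₁ + d₂ = 4n + ε`. -/
theorem stmt15 (k : ℤ) (hk : 0 ≤ k) :
    let n := 64 * k ^ 4 + 28 * k ^ 2 + 7
    let ε := 8 * k + 2
    let d₁ := 16 * k ^ 2 + 8 * k + 5
    let d₂ := d₁ ^ 2 - 16 * k * d₁
    d₁ = ε ^ 2 / 4 + 4 ∧ Odd n ∧ 0 < d₁ ∧ 0 < d₂ ∧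
      d₁ ∣ (n ^ 2 + 1) / 2 ∧ d₂ ∣ (n ^ 2 + 1) / 2 ∧ d₁ + d₂ = 4 * n + ε := by
  intro n ε d₁ d₂
  have hd1 : (0:ℤ) < d₁ := by simp only [d₁]; nlinarith [sq_nonneg k]
  have hd2eq : d₂ = d₁ * (16 * k ^ 2 - 8 * k + 5) := by simp only [d₂, d₁]; ring
  have haux : (0:ℤ) < 16 * k ^ 2 - 8 * k + 5 := by nlinarith [sq_nonneg (4*k-1)]
  have hm : (n ^ 2 + 1) / 2 = d₂ * (8 * k ^ 4 + 4 * k ^ 2 + 1) := by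
    have h : n ^ 2 + 1 = 2 * (d₂ * (8 * k ^ 4 + 4 * k ^ 2 + 1)) := by
      simp only [n, d₂, d₁]; ring
    rw [h, Int.mul_ediv_cancel_left _ (by norm_num)]
  refine ⟨?_, ⟨32 * k ^ 4 + 14 * k ^ 2 + 3, by simp only [n]; ring⟩, hd1, ?_, ?_, ?_, ?_⟩
  · simp only [d₁, ε]
    have : (8 * k + 2) ^ 2 = 4 * (16 * k ^ 2 + 8 * k + 1) := by ring
    rw [this, Int.mul_ediv_cancel_left _ (by norm_num)]
    ring
  · rw [hd2eq]; positivity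
  · rw [hm, hd2eq]
    exact ⟨(16 * k ^ 2 - 8 * k + 5) * (8 * k ^ 4 + 4 * k ^ 2 + 1), by ring⟩
  · rw [hm]; exact ⟨_, rfl⟩
  · simp only [d₂, d₁, n, ε]; ring
end

section
/- Let d be a positive integer with d ≥ 2 (so that 2d−1 > 1). Then the equation (2d−1)n² − 2d·y² = 1 has no solutions in positive integers n, y. -/
/-- Let `d ≥ 2` be an integer. Then the equation `(2d−1)n² − 2d·y² = 1` has no solutions
in positive integers `n, y`. -/
theorem stmt17 (d : ℤ) (hd : 2 ≤ d) :
    ¬ ∃ n y : ℤ, 0 < n ∧ 0 < y ∧ (2 * d - 1) * n ^ 2 - 2 * d * y ^ 2 = 1 := by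
  rintro ⟨n, y, hn, hy, heq⟩
  suffices h : ∀ N : ℕ, ∀ n y : ℤ, n.natAbs ≤ N → 0 < n → 0 < y →
      (2 * d - 1) * n ^ 2 - 2 * d * y ^ 2 = 1 → False from
    h n.natAbs n y le_rfl hn hy heq
  intro N
  induction N with
  | zero => intro n y hN hn _ _; omega
  | succ N ih =>
    intro n y hN hn hy heq
    -- the descended solution
    have heq' : (2 * d - 1) * ((4*d-1)*n - 4*d*y) ^ 2
        - 2 * d * ((4*d-1)*y - (4*d-2)*n) ^ 2 = 1 := by linear_combination heq
    -- 2*d*y > (2*d-1)*n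
    have hy2 : 1 ≤ y ^ 2 := by nlinarith
    have hn2 : 1 ≤ n ^ 2 := by nlinarith
    have hkey : (2*d-1)*n < 2*d*y := by
      by_contra hc
      push_neg at hc
      have h1 : (2*d*y)*(2*d*y) ≤ ((2*d-1)*n)*((2*d-1)*n) :=
        mul_le_mul hc hc (by positivity) (by nlinarith)
      nlinarith [h1, heq, hy2, hn2, mul_nonneg (by linarith : (0:ℤ) ≤ 2*d) (by linarith : (0:ℤ) ≤ y^2 - 1)]
    -- (4*d-1)*n > 4*d*y
    have hpos : 4*d*y < (4*d-1)*n := by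
      by_contra hc
      push_neg at hc
      have h1 : ((4*d-1)*n)*((4*d-1)*n) ≤ (4*d*y)*(4*d*y) :=
        mul_le_mul hc hc (by nlinarith) (by positivity)
      nlinarith [h1, heq, hn2]
    have hn'pos : 0 < (4*d-1)*n - 4*d*y := by linarith
    have hn'lt : (4*d-1)*n - 4*d*y < n := by linarith
    have hy'ne : (4*d-1)*y - (4*d-2)*n ≠ 0 := by
      intro h0
      rw [h0] at heq'
      have : 1 ≤ ((4*d-1)*n - 4*d*y) ^ 2 := by nlinarith [hn'pos]
      nlinarith
    have hy'pos : 0 < |(4*d-1)*y - (4*d-2)*n| := abs_pos.mpr hy'ne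
    have heq'' : (2 * d - 1) * ((4*d-1)*n - 4*d*y) ^ 2
        - 2 * d * (|(4*d-1)*y - (4*d-2)*n|) ^ 2 = 1 := by
      rw [sq_abs]; exact heq'
    exact ih ((4*d-1)*n - 4*d*y) (|(4*d-1)*y - (4*d-2)*n|)
      (by omega) hn'pos hy'pos heq''
end

section
/- Let d ≥ 1 and δ' ≥ 3 be integers with δ' odd. Then the continued fraction expansion of √(2d(2δ'²d − 1)) is [2dδ'−1; overline{1, 2δ'−2, 1, 2(2dδ'−1)}], and the fundamental solution of u² − 2d(2δ'²d−1)v² = 1 is (4δ'²d − 1, 2δ'). -/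
/-!
Write `N = 2d(2δ²d − 1) = (2dδ)² − 2d`, so that `2dδ − 1 < √N < 2dδ`. The complete quotients of
`√N` are `(√N + Pₙ) / Qₙ`, where `(Pₙ, Qₙ)` is `(0, 1)` and then runs periodically through
`(2dδ − 1, 4dδ − 2d − 1)`, `(2dδ − 2d, 2d)`, `(2dδ − 2d, 4dδ − 2d − 1)`, `(2dδ − 1, 1)`. One step of
the algorithm, from `(P, Q)` with partial quotient `a` to `(P', Q') = (aQ − P, (N − P'²) / Q)`, is
valid as soon as `P' < √N < P' + Q`, and for this cycle that is a consequence of the bounds on `√N`.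

If `x² − Ny² = 1` with `y ≠ 0`, then `x² = (2dδ|y|)² − 2dy² + 1` lies strictly between
`(2dδ|y| − 1)²` and `(2dδ|y|)²` unless `|y| ≥ 2δ`. Hence `y = 2δ`, attained by `x = 4δ²d − 1`,
is the smallest positive `y` of a nontrivial solution.
-/

open Int

namespace GenContFract

variable {K : Type*} [Field K] [LinearOrder K] [IsStrictOrderedRing K] [FloorRing K]

theorem of_s_get?_eq_of_fract_inv_eq {ξ : ℕ → K}
    (hξ : ∀ n, fract (ξ n) ≠ 0 ∧ (fract (ξ n))⁻¹ = ξ (n + 1)) (n : ℕ) :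
    (GenContFract.of (ξ 0)).s.get? n = some ⟨1, ⌊ξ (n + 1)⌋⟩ := by
  induction n generalizing ξ with
  | zero => rw [← (hξ 0).2]; exact of_s_head (hξ 0).1
  | succ n ih => rw [of_s_succ, (hξ 0).2]; exact ih fun k => hξ (k + 1)

theorem floor_fract_inv_add_div {s P Q P' Q' : K} {a : ℤ} (hQ : 0 < Q) (hQ' : Q' ≠ 0)
    (hP' : P' = a * Q - P) (hlo : P' < s) (hhi : s < P' + Q) (hQQ' : Q * Q' = s ^ 2 - P' ^ 2) :
    ⌊(s + P) / Q⌋ = a ∧ fract ((s + P) / Q) ≠ 0 ∧ (fract ((s + P) / Q))⁻¹ = (s + P') / Q' := by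
  subst hP'
  have hfloor : ⌊(s + P) / Q⌋ = a := by
    rw [floor_eq_iff, le_div_iff₀ hQ, div_lt_iff₀ hQ]; constructor <;> linarith
  have hfract : fract ((s + P) / Q) = (s - (a * Q - P)) / Q := by
    rw [← self_sub_floor, hfloor]; field_simp; ring
  have hs : s - (a * Q - P) ≠ 0 := sub_ne_zero.2 hlo.ne'
  refine ⟨hfloor, ?_, ?_⟩
  · rw [hfract]; exact div_ne_zero hs hQ.ne'
  · rw [hfract, inv_div, div_eq_div_iff hs hQ']; linear_combination hQQ'

theorem partDens_of_quadratic {s : K} {N : ℤ} {P Q a : ℕ → ℤ} (hs : s ^ 2 = N)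
    (hQ : ∀ n, 0 < Q n) (hP : ∀ n, P (n + 1) = a n * Q n - P n)
    (hPQ : ∀ n, Q n * Q (n + 1) = N - P (n + 1) ^ 2)
    (hlo : ∀ n, (P (n + 1) : K) < s) (hhi : ∀ n, s < P (n + 1) + Q n) :
    (GenContFract.of ((s + P 0) / Q 0)).h = a 0 ∧
      ∀ n, (GenContFract.of ((s + P 0) / Q 0)).partDens.get? n = some (a (n + 1) : K) := by
  set ξ : ℕ → K := fun n => (s + P n) / Q n
  have step (n : ℕ) : ⌊ξ n⌋ = a n ∧ fract (ξ n) ≠ 0 ∧ (fract (ξ n))⁻¹ = ξ (n + 1) :=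
    floor_fract_inv_add_div (by exact_mod_cast hQ n) (by exact_mod_cast (hQ (n + 1)).ne')
      (by exact_mod_cast hP n) (hlo n) (hhi n) (by rw [hs]; exact_mod_cast hPQ n)
  refine ⟨by rw [of_h_eq_floor]; exact congrArg _ (step 0).1, fun n => ?_⟩
  rw [GenContFract.partDens, Stream'.Seq.map_get?,
    of_s_get?_eq_of_fract_inv_eq (fun n => (step n).2) n, (step (n + 1)).1]
  rfl

end GenContFract

theorem Real.sub_one_lt_sqrt_sq_sub_and_lt {c e : ℝ} (he : 0 < e) (hec : e < 2 * c - 1) :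
    c - 1 < √(c ^ 2 - e) ∧ √(c ^ 2 - e) < c :=
  ⟨Real.lt_sqrt_of_sq_lt (by nlinarith), (Real.sqrt_lt' (by linarith)).2 (by linarith)⟩

namespace Pell

theorem Solution₁.two_mul_le_mul_abs_y {D c e : ℤ} (hD : D = c ^ 2 - e) (he : 1 < e)
    (b : Solution₁ D) (hy : b.y ≠ 0) : 2 * c ≤ e * |b.y| := by
  by_contra! h
  have hy' : 0 < |b.y| := abs_pos.2 hy
  have hc : 0 < c := by nlinarith
  have hx : b.x ^ 2 = (c * |b.y|) ^ 2 - e * |b.y| ^ 2 + 1 := by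
    rw [mul_pow, sq_abs]; linear_combination b.prop_x + b.y ^ 2 * hD
  have hupper : |b.x| < c * |b.y| := by
    rw [← abs_of_pos (mul_pos hc hy'), ← sq_lt_sq]; nlinarith
  have hlower : c * |b.y| - 1 < |b.x| := by
    rw [← abs_of_nonneg (by nlinarith : 0 ≤ c * |b.y| - 1), ← sq_lt_sq]; nlinarith
  omega

theorem isFundamental_of_y_le_abs_y {D : ℤ} (a : Solution₁ D) (hx : 1 < a.x) (hy : 0 < a.y)
    (h : ∀ b : Solution₁ D, 1 < b.x → a.y ≤ |b.y|) : IsFundamental a := by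
  refine ⟨hx, hy, fun {b} hb => ?_⟩
  have hD := Solution₁.d_pos_of_one_lt_x hx
  have hy2 : a.y ^ 2 ≤ b.y ^ 2 := by rw [← sq_abs b.y]; exact pow_le_pow_left₀ hy.le (h b hb) 2
  have hx2 : a.x ^ 2 ≤ b.x ^ 2 := by rw [a.prop_x, b.prop_x]; nlinarith
  exact (pow_le_pow_iff_left₀ (by linarith) (by linarith) two_ne_zero).1 hx2

end Pell

namespace PellCF

variable (d δ : ℤ)

/- `(√N + P d δ n) / Q d δ n` is the `n`-th complete quotient and `A d δ n` the `n`-th partial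
quotient of `√N`, where `N = 2d(2δ²d − 1)`. -/

def P : ℕ → ℤ
  | 0 => 0
  | n + 1 =>
    match n % 4 with
    | 1 | 2 => 2 * d * δ - 2 * d
    | _ => 2 * d * δ - 1

def Q : ℕ → ℤ
  | 0 => 1
  | n + 1 =>
    match n % 4 with
    | 1 => 2 * d
    | 3 => 1
    | _ => 4 * d * δ - 2 * d - 1

def A : ℕ → ℤ
  | 0 => 2 * d * δ - 1
  | n + 1 =>
    match n % 4 with
    | 1 => 2 * δ - 2
    | 3 => 2 * (2 * d * δ - 1)
    | _ => 1

theorem mod_four_cases (n : ℕ) :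
    n % 4 = 0 ∧ (n + 1) % 4 = 1 ∨ n % 4 = 1 ∧ (n + 1) % 4 = 2 ∨
      n % 4 = 2 ∧ (n + 1) % 4 = 3 ∨ n % 4 = 3 ∧ (n + 1) % 4 = 0 := by
  omega

theorem P_succ (n : ℕ) : P d δ (n + 1) = A d δ n * Q d δ n - P d δ n := by
  rcases n with _ | n
  · simp [P, Q, A]
  · rcases mod_four_cases n with ⟨h, h'⟩ | ⟨h, h'⟩ | ⟨h, h'⟩ | ⟨h, h'⟩ <;>
      simp only [P, Q, A, h, h'] <;> ring

theorem Q_mul_Q_succ (n : ℕ) :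
    Q d δ n * Q d δ (n + 1) = 2 * d * (2 * δ ^ 2 * d - 1) - P d δ (n + 1) ^ 2 := by
  rcases n with _ | n
  · simp only [P, Q, Nat.zero_mod]; ring
  · rcases mod_four_cases n with ⟨h, h'⟩ | ⟨h, h'⟩ | ⟨h, h'⟩ | ⟨h, h'⟩ <;>
      simp only [P, Q, h, h'] <;> ring

theorem Q_pos (hd : 1 ≤ d) (hδ : 1 ≤ δ) (n : ℕ) : 0 < Q d δ n := by
  rcases n with _ | n
  · simp [Q]
  · rcases mod_four_cases n with ⟨h, -⟩ | ⟨h, -⟩ | ⟨h, -⟩ | ⟨h, -⟩ <;>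
      simp only [Q, h] <;> nlinarith

theorem P_succ_le (hd : 1 ≤ d) (n : ℕ) : P d δ (n + 1) ≤ 2 * d * δ - 1 := by
  simp only [P]; split <;> omega

theorem le_P_succ_add_Q (hd : 1 ≤ d) (hδ : 2 ≤ δ) (n : ℕ) :
    2 * d * δ ≤ P d δ (n + 1) + Q d δ n := by
  rcases n with _ | n
  · simp [P, Q]
  · rcases mod_four_cases n with ⟨h, h'⟩ | ⟨h, h'⟩ | ⟨h, h'⟩ | ⟨h, h'⟩ <;>
      simp only [P, Q, h, h'] <;> nlinarith

theorem A_four_mul_add (n : ℕ) :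
    A d δ (4 * n + 1) = 1 ∧ A d δ (4 * n + 2) = 2 * δ - 2 ∧ A d δ (4 * n + 3) = 1 ∧
      A d δ (4 * n + 4) = 2 * (2 * d * δ - 1) := by
  simp [A, Nat.add_mod]

theorem of_sqrt (hd : 1 ≤ d) (hδ : 2 ≤ δ) :
    (GenContFract.of √(2 * d * (2 * δ ^ 2 * d - 1) : ℝ)).h = A d δ 0 ∧
      ∀ n, (GenContFract.of √(2 * d * (2 * δ ^ 2 * d - 1) : ℝ)).partDens.get? n =
        some (A d δ (n + 1) : ℝ) := by
  have hdR : (1 : ℝ) ≤ d := by exact_mod_cast hd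
  have hδR : (2 : ℝ) ≤ δ := by exact_mod_cast hδ
  have hN : (2 * d * (2 * δ ^ 2 * d - 1) : ℝ) = (2 * d * δ) ^ 2 - 2 * d := by ring
  obtain ⟨hlo, hhi⟩ := Real.sub_one_lt_sqrt_sq_sub_and_lt (c := 2 * d * δ) (e := 2 * d)
    (by positivity) (by nlinarith)
  rw [← hN] at hlo hhi
  have hs : √(2 * d * (2 * δ ^ 2 * d - 1) : ℝ) ^ 2 = ((2 * d * (2 * δ ^ 2 * d - 1) : ℤ) : ℝ) := by
    rw [Real.sq_sqrt (Real.sqrt_pos.1 (by nlinarith)).le]; push_cast; ring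
  have hP (n : ℕ) : (P d δ (n + 1) : ℝ) ≤ 2 * d * δ - 1 := by exact_mod_cast P_succ_le d δ hd n
  have hPQ (n : ℕ) : (2 * d * δ : ℝ) ≤ P d δ (n + 1) + Q d δ n := by
    exact_mod_cast le_P_succ_add_Q d δ hd hδ n
  simpa only [P, Q, Int.cast_zero, Int.cast_one, add_zero, div_one] using
    GenContFract.partDens_of_quadratic hs (Q_pos d δ hd (by omega)) (P_succ d δ) (Q_mul_Q_succ d δ)
      (fun n => (hP n).trans_lt hlo) (fun n => hhi.trans_le (hPQ n))

theorem isFundamental (hd : 1 ≤ d) (hδ : 1 ≤ δ) :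
    Pell.IsFundamental (Pell.Solution₁.mk (4 * δ ^ 2 * d - 1) (2 * δ) (by ring) :
      Pell.Solution₁ (2 * d * (2 * δ ^ 2 * d - 1))) := by
  refine Pell.isFundamental_of_y_le_abs_y _ (by simp only [Pell.Solution₁.x_mk]; nlinarith)
    (by simp only [Pell.Solution₁.y_mk]; omega) fun b hb => ?_
  have := Pell.Solution₁.two_mul_le_mul_abs_y (c := 2 * d * δ) (e := 2 * d) (by ring) (by omega)
    b (Pell.Solution₁.y_ne_zero_of_one_lt_x hb)
  simp only [Pell.Solution₁.y_mk]
  nlinarith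

end PellCF

/-- Let `d ≥ 1` and `δ' ≥ 3` be integers with `δ'` odd. Then the continued fraction expansion
of `√(2d(2δ'²d − 1))` is `[2dδ'−1; 1, 2δ'−2, 1, 2(2dδ'−1), …]` (periodic with period
`(1, 2δ'−2, 1, 2(2dδ'−1))`), and the fundamental solution of `u² − 2d(2δ'²d−1)v² = 1` is
`(4δ'²d − 1, 2δ')`. -/
theorem stmt18 (d δ' : ℤ) (hd : 1 ≤ d) (hδ' : 3 ≤ δ') :
    ((GenContFract.of (Real.sqrt (2 * d * (2 * δ' ^ 2 * d - 1)))).h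
        = 2 * (d : ℝ) * (δ' : ℝ) - 1 ∧
      ∀ n : ℕ,
        (GenContFract.of (Real.sqrt (2 * d * (2 * δ' ^ 2 * d - 1)))).partDens.get? (4 * n)
          = some (1 : ℝ) ∧
        (GenContFract.of (Real.sqrt (2 * d * (2 * δ' ^ 2 * d - 1)))).partDens.get? (4 * n + 1)
          = some (2 * (δ' : ℝ) - 2) ∧
        (GenContFract.of (Real.sqrt (2 * d * (2 * δ' ^ 2 * d - 1)))).partDens.get? (4 * n + 2)
          = some (1 : ℝ) ∧
        (GenContFract.of (Real.sqrt (2 * d * (2 * δ' ^ 2 * d - 1)))).partDens.get? (4 * n + 3)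
          = some (2 * (2 * (d : ℝ) * (δ' : ℝ) - 1))) ∧
    Pell.IsFundamental
      (Pell.Solution₁.mk (4 * δ' ^ 2 * d - 1) (2 * δ') (by ring) :
        Pell.Solution₁ (2 * d * (2 * δ' ^ 2 * d - 1))) := by
  obtain ⟨hh, hpd⟩ := PellCF.of_sqrt d δ' hd (by omega)
  refine ⟨⟨by rw [hh]; simp [PellCF.A], fun n => ?_⟩, PellCF.isFundamental d δ' hd (by omega)⟩
  obtain ⟨h1, h2, h3, h4⟩ := PellCF.A_four_mul_add d δ' n
  simp [hpd, h1, h2, h3, h4]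
end

section
/- Let d ≥ 1 and δ' ≥ 3 be integers. Then the equation (2δ'²d − 1)n² − 2d·y² = 1 has no solutions in positive integers n, y. -/
lemma aux19 (d δ' : ℤ) (hd : 1 ≤ d) (hδ' : 3 ≤ δ') :
    ∀ N : ℕ, ∀ x y : ℤ, x ≤ (N : ℤ) → 0 < x → 0 < y →
      (2 * δ' ^ 2 * d - 1) * x ^ 2 - 2 * d * y ^ 2 = 1 → False := by
  have h9 : (9 : ℤ) ≤ δ' ^ 2 := by nlinarith
  have h9d : (9 : ℤ) ≤ δ' ^ 2 * d := by
    calc (9 : ℤ) = 9 * 1 := by ring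
    _ ≤ δ' ^ 2 * d := mul_le_mul h9 hd one_pos.le (by linarith)
  have ha17 : (17 : ℤ) ≤ 2 * δ' ^ 2 * d - 1 := by linarith
  intro N
  induction N with
  | zero =>
    intro x y hxN hx _ _
    simp at hxN
    omega
  | succ N ih =>
    intro x y hxN hx hy h
    rcases lt_or_ge x 2 with hx1 | hx2
    · -- x = 1 case
      have hx1' : x = 1 := by omega
      subst hx1'
      have h2 : 2 * (d * (δ' ^ 2 - y ^ 2)) = 2 := by linear_combination h
      have h3 : d * (δ' ^ 2 - y ^ 2) = 1 := by linarith
      have hs : δ' ^ 2 - y ^ 2 = 1 := by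
        rcases le_or_gt (δ' ^ 2 - y ^ 2) 0 with hle | hgt
        · nlinarith
        · nlinarith
      have hylt : y < δ' := by nlinarith
      nlinarith
    · -- x ≥ 2 : descent
      have hx2sq : (4 : ℤ) ≤ x ^ 2 := by nlinarith
      have hid : (2 * d * δ' * y) ^ 2 - ((2 * δ' ^ 2 * d - 1) * x) ^ 2
          = (2 * δ' ^ 2 * d - 1) * x ^ 2 - (2 * δ' ^ 2 * d - 1) - 1 := by
        linear_combination (-(2 * d * δ' ^ 2)) * h
      have hrhs : 0 < (2 * d * δ' * y) ^ 2 - ((2 * δ' ^ 2 * d - 1) * x) ^ 2 := by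
        rw [hid]; nlinarith
      have hdδ'pos : (0 : ℤ) < 2 * d * δ' := by nlinarith
      have hby : (2 * δ' ^ 2 * d - 1) * x < 2 * d * δ' * y := by
        by_contra hc
        push_neg at hc
        have h0 : (0 : ℤ) ≤ 2 * d * δ' * y := (mul_pos hdδ'pos hy).le
        have h1 : (2 * d * δ' * y) ^ 2 ≤ ((2 * δ' ^ 2 * d - 1) * x) ^ 2 :=
          pow_le_pow_left₀ h0 hc 2
        linarith
      set x' : ℤ := (4 * δ' ^ 2 * d - 1) * x - 4 * d * δ' * y with hx'def
      set y' : ℤ := (4 * δ' ^ 2 * d - 1) * y - 2 * δ' * (2 * δ' ^ 2 * d - 1) * x with hy'def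
      have heq' : (2 * δ' ^ 2 * d - 1) * x' ^ 2 - 2 * d * y' ^ 2 = 1 := by
        rw [hx'def, hy'def]
        linear_combination ((4 * δ' ^ 2 * d - 1) ^ 2 - 8 * d * δ' ^ 2 * (2 * δ' ^ 2 * d - 1)) * h
      have hid2 : ((4 * δ' ^ 2 * d - 1) * x) ^ 2 - (4 * d * δ' * y) ^ 2
          = x ^ 2 + 8 * d * δ' ^ 2 := by
        linear_combination (8 * d * δ' ^ 2) * h
      have hid2pos : 0 < ((4 * δ' ^ 2 * d - 1) * x) ^ 2 - (4 * d * δ' * y) ^ 2 := by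
        rw [hid2]; nlinarith
      have hx'pos : 0 < x' := by
        rw [hx'def]
        have hlt : 4 * d * δ' * y < (4 * δ' ^ 2 * d - 1) * x := by
          by_contra hc
          push_neg at hc
          have h0 : (0 : ℤ) ≤ (4 * δ' ^ 2 * d - 1) * x :=
            (mul_pos (by linarith : (0 : ℤ) < 4 * δ' ^ 2 * d - 1) hx).le
          have h1 : ((4 * δ' ^ 2 * d - 1) * x) ^ 2 ≤ (4 * d * δ' * y) ^ 2 :=
            pow_le_pow_left₀ h0 hc 2
          linarith
        linarith
      have hx'lt : x' < x := by
        rw [hx'def]; linarith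
      have hy'ne : y' ≠ 0 := by
        intro h0
        rw [h0] at heq'
        have heq'' : (2 * δ' ^ 2 * d - 1) * x' ^ 2 = 1 := by linear_combination heq'
        have hx'1 : (1 : ℤ) ≤ x' := hx'pos
        have hx'sq : (1 : ℤ) ^ 2 ≤ x' ^ 2 := pow_le_pow_left₀ (by norm_num) hx'1 2
        have hbig : (17 : ℤ) * 1 ≤ (2 * δ' ^ 2 * d - 1) * x' ^ 2 :=
          mul_le_mul ha17 (by linarith) one_pos.le (by linarith)
        linarith
      have habs : 0 < |y'| := abs_pos.mpr hy'ne
      exact ih x' |y'| (by push_cast at hxN ⊢; linarith) hx'pos habs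
        (by rw [sq_abs]; exact heq')

/-- Let `d ≥ 1` and `δ' ≥ 3` be integers. Then the equation `(2δ'²d − 1)n² − 2d·y² = 1`
has no solutions in positive integers `n, y`. -/
theorem stmt19 (d δ' : ℤ) (hd : 1 ≤ d) (hδ' : 3 ≤ δ') :
    ¬ ∃ n y : ℤ, 0 < n ∧ 0 < y ∧ (2 * δ' ^ 2 * d - 1) * n ^ 2 - 2 * d * y ^ 2 = 1 := by
  rintro ⟨n, y, hn, hy, h⟩
  exact aux19 d δ' hd hδ' n.toNat n y (Int.toNat_of_nonneg hn.le).ge hn hy h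
end
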